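/- arXiv:1405.4161 — 3 statements merged into one kernel-verified Lean document; each statement's English description precedes it below -/
import Mathlib

section
/- Every nonempty compact tropically convex subset C of 𝕋ⁿ contains its coordinatewise supremum; that is, there is a unique element of C which is the coordinatewise maximum of all elements of C (the tropical barycenter). -/
/-!
A tropically convex set is closed under the coordinatewise maximum `u ⊔ v` (take `a = b = 0`),
hence directed. In `𝕋ⁿ` the sets `Ici x` are closed, so for a compact directed set `C` the
family `C ∩ Ici x`, `x ∈ C`, has the finite intersection property; a point common to all of them
is a greatest element of `C`, and a greatest element is the coordinatewise supremum.
-/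

/-- Tropical convexity in `𝕋ⁿ` with `𝕋 = ℝ ∪ {-∞}` embedded in `EReal`. -/
def TropConvex {n : ℕ} (C : Set (Fin n → EReal)) : Prop :=
  ∀ u ∈ C, ∀ v ∈ C, ∀ a b : EReal, max a b = 0 →
    (fun i => max (a + u i) (b + v i)) ∈ C

open Set

theorem IsCompact.exists_isGreatest_of_directedOn {α : Type*} [Preorder α] [TopologicalSpace α]
    [ClosedIciTopology α] {s : Set α} (hs : IsCompact s) (ne_s : s.Nonempty)
    (hd : DirectedOn (· ≤ ·) s) : ∃ x, IsGreatest s x := by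
  have : Nonempty s := ne_s.to_subtype
  suffices (s ∩ ⋂ x ∈ s, Ici x).Nonempty from
    ⟨this.choose, this.choose_spec.1, mem_iInter₂.mp this.choose_spec.2⟩
  rw [biInter_eq_iInter]
  by_contra H
  rw [not_nonempty_iff_eq_empty] at H
  have hdir : Directed (· ⊇ ·) fun x : s => Ici (x : α) := fun x y =>
    let ⟨z, hz, hxz, hyz⟩ := hd x x.2 y y.2
    ⟨⟨z, hz⟩, Ici_subset_Ici.mpr hxz, Ici_subset_Ici.mpr hyz⟩
  obtain ⟨x, hx⟩ := hs.elim_directed_family_closed _ (fun _ => isClosed_Ici) H hdir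
  exact not_nonempty_iff_eq_empty.mpr hx ⟨x, x.2, le_rfl⟩

theorem TropConvex.supClosed {n : ℕ} {C : Set (Fin n → EReal)} (hC : TropConvex C) :
    SupClosed C := fun u hu v hv => by
  have h := hC u hu v hv 0 0 (max_self 0)
  simp only [zero_add] at h
  exact h

/-- A nonempty compact tropically convex set contains its coordinatewise supremum,
which is the unique element of `C` dominating all elements of `C` (tropical barycenter). -/
theorem tropical_barycenter_mem {n : ℕ} (C : Set (Fin n → EReal))
    (hne : C.Nonempty) (hcomp : IsCompact C) (hconv : TropConvex C) :
    (fun i => ⨆ x ∈ C, x i) ∈ C ∧ ∃! m, m ∈ C ∧ ∀ x ∈ C, x ≤ m := by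
  obtain ⟨m, hm⟩ := hcomp.exists_isGreatest_of_directedOn hne hconv.supClosed.directedOn
  have hsup : (fun i => ⨆ x ∈ C, x i) = m := funext fun i =>
    le_antisymm (iSup₂_le fun x hx => hm.2 hx i) (le_iSup₂_of_le m hm.1 le_rfl)
  exact ⟨hsup ▸ hm.1, m, hm, fun m' hm' => IsGreatest.unique hm' hm⟩
end

section
/- Define u_0(λ) = 1, v_0(λ) = min(2, λ), and for 1 ≤ i ≤ r: u_i(λ) = 1 + min(u_{i−1}(λ), v_{i−1}(λ)) and v_i(λ) = 1 − 1/2^i + max(u_{i−1}(λ), v_{i−1}(λ)). Then for every i ∈ {1,…,r} and every k ∈ {0,…,2^{i−1}−1}: for λ ∈ [4k/2^i, (4k+2)/2^i] one has u_i(λ) = i + λ − 2k/2^i and v_i(λ) = i + (2k+1)/2^i; and for λ ∈ [(4k+2)/2^i, (4k+4)/2^i] one has u_i(λ) = i + (2k+2)/2^i and v_i(λ) = i + λ − (2k+1)/2^i. -/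
/-!
Each map `G_i` is symmetric, so it only sees the unordered pair `{u, v}`. On the dyadic interval
`[2n/2^j, (2n+2)/2^j]` this pair is `{j + λ - n/2^j, j + (n+1)/2^j}`: a sloped entry and a flat
one, which cross at the midpoint `(2n+1)/2^j`. Applying `G_{j+1}` on either half of the interval
therefore yields the staircase formula at level `j + 1`, and the halves are again such intervals
at level `j + 1`, with indices `2n` and `2n + 1`.
-/

namespace TropicalCentralPath

noncomputable def G (i : ℕ) (a b : ℝ) : ℝ × ℝ := (1 + min a b, 1 - 1 / 2 ^ i + max a b)

lemma G_eq_of_sym2_eq {i : ℕ} {a b c d : ℝ} (h : s(a, b) = s(c, d)) : G i a b = G i c d := by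
  rcases Sym2.eq_iff.mp h with ⟨rfl, rfl⟩ | ⟨rfl, rfl⟩
  · rfl
  · simp only [G, min_comm, max_comm]

lemma G_of_le {i : ℕ} {a b : ℝ} (h : a ≤ b) : G i a b = (1 + a, 1 - 1 / 2 ^ i + b) := by
  simp only [G, min_eq_left h, max_eq_right h]

noncomputable def stair (j : ℕ) (x l : ℝ) : Sym2 ℝ := s(j + l - x / 2 ^ j, j + (x + 1) / 2 ^ j)

lemma stair_snd_sub_fst (j : ℕ) (x l : ℝ) :
    ((j : ℝ) + (x + 1) / 2 ^ j) - (j + l - x / 2 ^ j) = (2 * x + 1 - 2 ^ j * l) / 2 ^ j := by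
  field_simp
  ring

lemma G_stair_of_le_mid {j : ℕ} {x l a b : ℝ} (hab : s(a, b) = stair j x l)
    (hl : 2 ^ j * l ≤ 2 * x + 1) :
    G (j + 1) a b = (((j + 1 : ℕ) : ℝ) + l - 2 * x / 2 ^ (j + 1),
      ((j + 1 : ℕ) : ℝ) + (2 * x + 1) / 2 ^ (j + 1)) := by
  have hle : (j : ℝ) + l - x / 2 ^ j ≤ j + (x + 1) / 2 ^ j := by
    rw [← sub_nonneg, stair_snd_sub_fst]
    exact div_nonneg (by linarith) (by positivity)
  rw [G_eq_of_sym2_eq hab, G_of_le hle]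
  push_cast
  rw [pow_succ]
  ext <;> ring

lemma G_stair_of_mid_le {j : ℕ} {x l a b : ℝ} (hab : s(a, b) = stair j x l)
    (hl : 2 * x + 1 ≤ 2 ^ j * l) :
    G (j + 1) a b = (((j + 1 : ℕ) : ℝ) + (2 * x + 2) / 2 ^ (j + 1),
      ((j + 1 : ℕ) : ℝ) + l - (2 * x + 1) / 2 ^ (j + 1)) := by
  have hle : (j : ℝ) + (x + 1) / 2 ^ j ≤ j + l - x / 2 ^ j := by
    rw [← sub_nonpos, stair_snd_sub_fst]
    exact div_nonpos_of_nonpos_of_nonneg (by linarith) (by positivity)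
  rw [G_eq_of_sym2_eq (hab.trans Sym2.eq_swap), G_of_le hle]
  push_cast
  rw [pow_succ]
  ext <;> ring

theorem sym2_eq_stair {u v : ℕ → ℝ → ℝ} (hu0 : ∀ l : ℝ, u 0 l = 1)
    (hv0 : ∀ l : ℝ, v 0 l = min 2 l)
    (hG : ∀ (i : ℕ) (l : ℝ), (u (i + 1) l, v (i + 1) l) = G (i + 1) (u i l) (v i l)) :
    ∀ (j n : ℕ), n < 2 ^ j → ∀ l : ℝ, 2 * (n : ℝ) ≤ 2 ^ j * l → 2 ^ j * l ≤ 2 * n + 2 →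
      s(u j l, v j l) = stair j n l := by
  intro j
  induction j with
  | zero =>
    intro n hn l _ hl2
    obtain rfl : n = 0 := by simpa using hn
    simp only [pow_zero, one_mul, CharP.cast_eq_zero, mul_zero, zero_add] at hl2
    rw [hu0, hv0, min_eq_right hl2, Sym2.eq_swap]
    simp [stair]
  | succ j ih =>
    intro n hn l hl1 hl2
    rw [pow_succ] at hn hl1 hl2
    obtain ⟨m, rfl | rfl⟩ := Nat.even_or_odd' n
    · push_cast at hl1 hl2
      have hpair := ih m (by omega) l (by linarith) (by linarith)
      obtain ⟨hu, hv⟩ := Prod.mk_inj.mp ((hG j l).trans (G_stair_of_le_mid hpair (by linarith)))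
      rw [hu, hv, stair]
      push_cast
      ring_nf
    · push_cast at hl1 hl2
      have hpair := ih m (by omega) l (by linarith) (by linarith)
      obtain ⟨hu, hv⟩ := Prod.mk_inj.mp ((hG j l).trans (G_stair_of_mid_le hpair (by linarith)))
      rw [hu, hv, stair, Sym2.eq_swap]
      push_cast
      ring_nf

end TropicalCentralPath

theorem staircase_formula_general (r : ℕ) (u v : ℕ → ℝ → ℝ)
    (hu0 : ∀ l : ℝ, u 0 l = 1) (hv0 : ∀ l : ℝ, v 0 l = min 2 l)
    (hu : ∀ (i : ℕ) (l : ℝ), u (i + 1) l = 1 + min (u i l) (v i l))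
    (hv : ∀ (i : ℕ) (l : ℝ), v (i + 1) l = 1 - 1 / 2 ^ (i + 1) + max (u i l) (v i l)) :
    ∀ i : ℕ, 1 ≤ i → i ≤ r → ∀ k : ℕ, k ≤ 2 ^ (i - 1) - 1 →
      (∀ l : ℝ, 4 * (k : ℝ) / 2 ^ i ≤ l → l ≤ (4 * (k : ℝ) + 2) / 2 ^ i →
        u i l = (i : ℝ) + l - 2 * (k : ℝ) / 2 ^ i ∧
        v i l = (i : ℝ) + (2 * (k : ℝ) + 1) / 2 ^ i) ∧
      (∀ l : ℝ, (4 * (k : ℝ) + 2) / 2 ^ i ≤ l → l ≤ (4 * (k : ℝ) + 4) / 2 ^ i →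
        u i l = (i : ℝ) + (2 * (k : ℝ) + 2) / 2 ^ i ∧
        v i l = (i : ℝ) + l - (2 * (k : ℝ) + 1) / 2 ^ i) := by
  have hG : ∀ (i : ℕ) (l : ℝ),
      (u (i + 1) l, v (i + 1) l) = TropicalCentralPath.G (i + 1) (u i l) (v i l) :=
    fun i l ↦ by rw [hu, hv, TropicalCentralPath.G]
  rintro i hi - k hk
  obtain ⟨j, rfl⟩ : ∃ j, i = j + 1 := ⟨i - 1, by omega⟩
  have hk : k < 2 ^ j := by
    rw [Nat.add_sub_cancel] at hk
    have := Nat.one_le_two_pow (n := j)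
    omega
  have hpos : (0 : ℝ) < 2 ^ (j + 1) := by positivity
  have hpair := TropicalCentralPath.sym2_eq_stair hu0 hv0 hG j k hk
  constructor
  · intro l hl1 hl2
    rw [div_le_iff₀ hpos, pow_succ] at hl1
    rw [le_div_iff₀ hpos, pow_succ] at hl2
    exact Prod.mk_inj.mp ((hG j l).trans <|
      TropicalCentralPath.G_stair_of_le_mid (hpair l (by linarith) (by linarith)) (by linarith))
  · intro l hl1 hl2
    rw [div_le_iff₀ hpos, pow_succ] at hl1
    rw [le_div_iff₀ hpos, pow_succ] at hl2
    exact Prod.mk_inj.mp ((hG j l).trans <|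
      TropicalCentralPath.G_stair_of_mid_le (hpair l (by linarith) (by linarith)) (by linarith))

/-- The staircase formula for the tropical central path dynamics
`u_0(λ) = 1`, `v_0(λ) = min(2,λ)`, `(u_i, v_i) = G_i(u_{i-1}, v_{i-1})` with
`G_i(a,b) = (1 + min(a,b), 1 - 1/2^i + max(a,b))`. -/
theorem staircase_formula (r : ℕ) (hr : 1 ≤ r) (u v : ℕ → ℝ → ℝ)
    (hu0 : ∀ l : ℝ, u 0 l = 1) (hv0 : ∀ l : ℝ, v 0 l = min 2 l)
    (hu : ∀ (i : ℕ) (l : ℝ), u (i + 1) l = 1 + min (u i l) (v i l))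
    (hv : ∀ (i : ℕ) (l : ℝ), v (i + 1) l = 1 - 1 / 2 ^ (i + 1) + max (u i l) (v i l)) :
    ∀ i : ℕ, 1 ≤ i → i ≤ r → ∀ k : ℕ, k ≤ 2 ^ (i - 1) - 1 →
      (∀ l : ℝ, 4 * (k : ℝ) / 2 ^ i ≤ l → l ≤ (4 * (k : ℝ) + 2) / 2 ^ i →
        u i l = (i : ℝ) + l - 2 * (k : ℝ) / 2 ^ i ∧
        v i l = (i : ℝ) + (2 * (k : ℝ) + 1) / 2 ^ i) ∧
      (∀ l : ℝ, (4 * (k : ℝ) + 2) / 2 ^ i ≤ l → l ≤ (4 * (k : ℝ) + 4) / 2 ^ i →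
        u i l = (i : ℝ) + (2 * (k : ℝ) + 2) / 2 ^ i ∧
        v i l = (i : ℝ) + l - (2 * (k : ℝ) + 1) / 2 ^ i) :=
  staircase_formula_general r u v hu0 hv0 hu hv
end

section
/- Let u_0(λ)=1, v_0(λ)=min(2,λ) and (u_i,v_i)=G_i(u_{i−1},v_{i−1}) with G_i(a,b)=(1+min(a,b), 1−1/2^i+max(a,b)). Then for the piecewise-linear curve λ ↦ (u_r(λ), v_r(λ)) on [0,2], the function λ ↦ u_r(λ) − v_r(λ) changes sign at least 2^{r−1} − 1 times on [0,2]. -/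
private lemma neg_one_pow_congr_mod2 {m n : ℕ} (h : m % 2 = n % 2) :
    ((-1 : ℝ)) ^ m = (-1) ^ n := by
  rcases Nat.even_or_odd m with hm | hm
  · have hn : Even n := by rw [Nat.even_iff] at hm ⊢; omega
    rw [hm.neg_one_pow, hn.neg_one_pow]
  · have hn : Odd n := by rw [Nat.odd_iff] at hm ⊢; omega
    rw [hm.neg_one_pow, hn.neg_one_pow]

private lemma tent_iter (s : ℕ) : ∀ j : ℕ, j ≤ 2 ^ (s + 1) →
    (fun t : ℝ => 1 - 2 * |t|)^[s + 1] ((2 ^ s - (j : ℝ)) / 2 ^ s) = (-1) ^ (j + 1) := by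
  induction s with
  | zero =>
    intro j hj
    interval_cases j <;> norm_num
  | succ s ih =>
    intro j hj
    rw [Function.iterate_succ_apply]
    have h2 : (0 : ℝ) < 2 ^ (s + 1) := by positivity
    by_cases hc : j ≤ 2 ^ (s + 1)
    · have hjr : (j : ℝ) ≤ 2 ^ (s + 1) := by exact_mod_cast hc
      have hx : 1 - 2 * |(2 ^ (s + 1) - (j : ℝ)) / 2 ^ (s + 1)|
          = (2 ^ s - ((2 ^ (s + 1) - j : ℕ) : ℝ)) / 2 ^ s := by
        rw [abs_of_nonneg (div_nonneg (by linarith) (by positivity))]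
        push_cast [Nat.cast_sub hc]
        field_simp
        ring
      rw [hx, ih _ (by omega)]
      exact neg_one_pow_congr_mod2 (by omega)
    · push_neg at hc
      have hjr : (2 : ℝ) ^ (s + 1) ≤ (j : ℝ) := by exact_mod_cast hc.le
      have hx : 1 - 2 * |(2 ^ (s + 1) - (j : ℝ)) / 2 ^ (s + 1)|
          = (2 ^ s - ((j - 2 ^ (s + 1) : ℕ) : ℝ)) / 2 ^ s := by
        rw [abs_of_nonpos (div_nonpos_of_nonpos_of_nonneg (by linarith) (by positivity))]
        push_cast [Nat.cast_sub hc.le]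
        field_simp
        ring
      rw [hx, ih _ (by omega)]
      exact neg_one_pow_congr_mod2 (by omega)

/-- The function `λ ↦ u_r(λ) - v_r(λ)` of the tropical staircase construction changes sign
at least `2^{r-1} - 1` times on `[0,2]`: there exist `2^{r-1}` increasing points of `[0,2]`
at which consecutive values of `u_r - v_r` have opposite (nonzero) signs. -/
theorem staircase_sign_changes (r : ℕ) (hr : 1 ≤ r) (u v : ℕ → ℝ → ℝ)
    (hu0 : ∀ l : ℝ, u 0 l = 1) (hv0 : ∀ l : ℝ, v 0 l = min 2 l)
    (hu : ∀ (i : ℕ) (l : ℝ), u (i + 1) l = 1 + min (u i l) (v i l))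
    (hv : ∀ (i : ℕ) (l : ℝ), v (i + 1) l = 1 - 1 / 2 ^ (i + 1) + max (u i l) (v i l)) :
    ∃ lam : ℕ → ℝ,
      (∀ j k : ℕ, j < k → k ≤ 2 ^ (r - 1) - 1 → lam j < lam k) ∧
      (∀ j : ℕ, j ≤ 2 ^ (r - 1) - 1 → lam j ∈ Set.Icc (0 : ℝ) 2) ∧
      (∀ j : ℕ, j < 2 ^ (r - 1) - 1 →
        (u r (lam j) - v r (lam j)) * (u r (lam (j + 1)) - v r (lam (j + 1))) < 0) := by
  -- the difference u_i - v_i equals the i-th tent-map iterate of 1-λ, scaled by 2^{-i}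
  have hdiff : ∀ (i : ℕ) (l : ℝ), 0 ≤ l → l ≤ 2 →
      u i l - v i l = (fun t : ℝ => 1 - 2 * |t|)^[i] (1 - l) / 2 ^ i := by
    intro i l h0 h2
    induction i with
    | zero => simp [hu0, hv0, min_eq_right h2]
    | succ i ihi =>
      rw [hu, hv, Function.iterate_succ_apply']
      have hmm : max (u i l) (v i l) - min (u i l) (v i l) = |u i l - v i l| := by
        rw [max_sub_min_eq_abs, abs_sub_comm]
      have habs : |u i l - v i l| = |(fun t : ℝ => 1 - 2 * |t|)^[i] (1 - l)| / 2 ^ i := by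
        rw [ihi, abs_div, abs_of_pos (by positivity : (0:ℝ) < (2:ℝ) ^ i)]
      have h2i : (0 : ℝ) < 2 ^ i := by positivity
      have : min (u i l) (v i l) - max (u i l) (v i l)
          = -(|(fun t : ℝ => 1 - 2 * |t|)^[i] (1 - l)| / 2 ^ i) := by
        rw [← habs]; linarith
      rw [show (1:ℝ) + min (u i l) (v i l) - (1 - 1 / 2 ^ (i + 1) + max (u i l) (v i l))
          = 1 / 2 ^ (i + 1) + (min (u i l) (v i l) - max (u i l) (v i l)) by ring, this]
      field_simp
      ring
  obtain ⟨s, rfl⟩ : ∃ s, r = s + 1 := ⟨r - 1, by omega⟩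
  simp only [Nat.add_sub_cancel]
  have h2s : (0 : ℝ) < 2 ^ s := by positivity
  -- value at dyadic points
  have hval : ∀ j : ℕ, j ≤ 2 ^ (s + 1) →
      u (s + 1) ((j : ℝ) / 2 ^ s) - v (s + 1) ((j : ℝ) / 2 ^ s)
        = (-1) ^ (j + 1) / 2 ^ (s + 1) := by
    intro j hj
    have hjr : (j : ℝ) ≤ 2 ^ (s + 1) := by exact_mod_cast hj
    have hl0 : (0 : ℝ) ≤ (j : ℝ) / 2 ^ s := by positivity
    have hl2 : (j : ℝ) / 2 ^ s ≤ 2 := by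
      rw [div_le_iff₀ h2s]
      calc (j : ℝ) ≤ 2 ^ (s + 1) := hjr
        _ = 2 * 2 ^ s := by ring
    rw [hdiff _ _ hl0 hl2]
    have : (1 : ℝ) - (j : ℝ) / 2 ^ s = (2 ^ s - (j : ℝ)) / 2 ^ s := by
      field_simp
    rw [this, tent_iter s j hj]
  refine ⟨fun j => (j : ℝ) / 2 ^ s, ?_, ?_, ?_⟩
  · intro j k hjk _
    have : (j : ℝ) < k := by exact_mod_cast hjk
    exact div_lt_div_of_pos_right this h2s
  · intro j hj
    constructor
    · positivity
    · have hjr : (j : ℝ) ≤ 2 ^ (s + 1) := by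
        have : j ≤ 2 ^ (s + 1) := by
          have := Nat.one_le_two_pow (n := s)
          omega
        exact_mod_cast this
      rw [div_le_iff₀ h2s]
      calc (j : ℝ) ≤ 2 ^ (s + 1) := hjr
        _ = 2 * 2 ^ s := by ring
  · intro j hj
    have hj1 : j ≤ 2 ^ (s + 1) := by omega
    have hj2 : j + 1 ≤ 2 ^ (s + 1) := by omega
    rw [hval j hj1, hval (j + 1) hj2]
    have he : ((-1 : ℝ)) ^ (j + 1) * (-1) ^ (j + 1) = 1 := by
      rw [← pow_add]; exact Even.neg_one_pow ⟨j + 1, rfl⟩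
    have he2 : ((-1 : ℝ)) ^ (j + 1 + 1) = -(-1) ^ (j + 1) := by rw [pow_succ]; ring
    have hp : (0 : ℝ) < 1 / (2 ^ (s + 1) * 2 ^ (s + 1)) := by positivity
    calc ((-1 : ℝ)) ^ (j + 1) / 2 ^ (s + 1) * ((-1) ^ (j + 1 + 1) / 2 ^ (s + 1))
        = -(((-1 : ℝ)) ^ (j + 1) * (-1) ^ (j + 1) / (2 ^ (s + 1) * 2 ^ (s + 1))) := by
          rw [he2]; ring
      _ = -(1 / (2 ^ (s + 1) * 2 ^ (s + 1))) := by rw [he]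
      _ < 0 := by linarith
end
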